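/- Index identity for gcd and lcm: let u, v ∈ S, let d ∈ S be a greatest common divisor of u and v (d divides both and every common divisor of u and v divides d), and let m ∈ S satisfy u·S ∩ v·S = m·S. If d is an ordered product of a irreducible elements of S, m an ordered product of b irreducibles, u an ordered product of c irreducibles, and v an ordered product of e irreducibles (empty products allowed, equal to 1), then a + b = c + e. -/

import Mathlib

open scoped BigOperators

/-- `u` divides `w` in `S`: `w ∈ u·S`. -/
def SDvd {G : Type*} [Group G] (S : Submonoid G) (u w : G) : Prop := ∃ s ∈ S, w = u * s

/-- The left set `u·S = {u * s : s ∈ S}`. -/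
def leftSet {G : Type*} [Group G] (S : Submonoid G) (u : G) : Set G := {w | ∃ s ∈ S, w = u * s}

/-- `τ(u)`: the number of ordered factorizations `u = v * w` with `v, w ∈ S`. -/
noncomputable def tau {G : Type*} [Group G] (S : Submonoid G) (u : G) : ℕ :=
  Set.ncard {p : G × G | p.1 ∈ S ∧ p.2 ∈ S ∧ p.1 * p.2 = u}

/-- An integral monoid: a submonoid of a group satisfying Axioms I, II, III. -/
structure IntegralMonoid {G : Type*} [Group G] (S : Submonoid G) : Prop where
  ax1 : ∀ u ∈ S, u⁻¹ ∈ S → u = 1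
  ax2 : ∀ u : G, ∃ x ∈ S, ∃ y ∈ S, u = x * y⁻¹ ∧
        ∀ z ∈ S, ∀ w ∈ S, u = z * w⁻¹ → ∃ c ∈ S, z = x * c ∧ w = y * c
  ax3 : ∀ u ∈ S, {p : G × G | p.1 ∈ S ∧ p.2 ∈ S ∧ p.1 * p.2 = u}.Finite

/-- Axiom IV′ (homogeneity), in the equivalent form proved in the paper. -/
def Homogeneous {G : Type*} [Group G] (S : Submonoid G) : Prop :=
  ∀ w u v : G, w ∈ S → u ∈ S → v ∈ S →
    (∀ d ∈ S, SDvd S d w → SDvd S d u → d = 1) →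
    (∀ d ∈ S, SDvd S d w → SDvd S d v → d = 1) →
    leftSet S w ∩ leftSet S u = leftSet S w ∩ leftSet S v → u = v

/-
Any two factorizations of an element of `S` into irreducibles have the same length, so
`ind x`, the number of irreducible factors of `x`, is well defined and additive. The key input from
homogeneity is that if `u` is coprime to an irreducible `q` and `lcm(u, q) = u * a`, then `a` is
irreducible: a proper left divisor `t` of `a` would give `lcm(q, u) = lcm(q, u * t)`, forcing
`u = u * t`. This gives the Jordan–Hölder step `lcm(p, q) = p * b = q * a` with `a, b` irreducible
for distinct irreducibles `p, q`, hence uniqueness of the length, and, peeling off irreducible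
factors of `v` one at a time, `ind (lcm(u, v)) = ind u + ind v` for coprime `u, v`. Finally,
writing `u = d * u₁`, `v = d * v₁` with `d` a gcd, `u₁` and `v₁` are coprime and
`lcm(u, v) = d * lcm(u₁, v₁)`.
-/

section

variable {G : Type*} [Group G] {S : Submonoid G}

def SCoprime (S : Submonoid G) (u v : G) : Prop :=
  ∀ c ∈ S, SDvd S c u → SDvd S c v → c = 1

def SIsLcm (S : Submonoid G) (u v m : G) : Prop :=
  ∀ t, SDvd S m t ↔ SDvd S u t ∧ SDvd S v t

structure SIrreducible (S : Submonoid G) (p : G) : Prop where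
  mem : p ∈ S
  ne_one : p ≠ 1
  eq_one_or_eq : ∀ a ∈ S, SDvd S a p → a = 1 ∨ a = p

def factorPairs (S : Submonoid G) (x : G) : Set (G × G) :=
  {p | p.1 ∈ S ∧ p.2 ∈ S ∧ p.1 * p.2 = x}

/-- The number of irreducible factors of `x`, well defined by `Homogeneous.length_eq_of_prod_eq`
(junk value `0` when `x ∉ S`). -/
noncomputable def ind (S : Submonoid G) (x : G) : ℕ :=
  sInf {n | ∃ l : List G, (∀ p ∈ l, SIrreducible S p) ∧ l.prod = x ∧ l.length = n}

theorem SDvd.refl (a : G) : SDvd S a a := ⟨1, S.one_mem, (mul_one a).symm⟩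

theorem SDvd.trans {a b c : G} (hab : SDvd S a b) (hbc : SDvd S b c) : SDvd S a c := by
  obtain ⟨s, hs, rfl⟩ := hab
  obtain ⟨t, ht, rfl⟩ := hbc
  exact ⟨s * t, S.mul_mem hs ht, mul_assoc a s t⟩

theorem sdvd_mul_right (a : G) {b : G} (hb : b ∈ S) : SDvd S a (a * b) := ⟨b, hb, rfl⟩

theorem one_sdvd {a : G} (ha : a ∈ S) : SDvd S 1 a := ⟨a, ha, (one_mul a).symm⟩

theorem mul_sdvd_mul_iff_left {a b c : G} : SDvd S (a * b) (a * c) ↔ SDvd S b c := by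
  constructor
  · rintro ⟨s, hs, h⟩
    exact ⟨s, hs, mul_left_cancel (h.trans (mul_assoc a b s))⟩
  · rintro ⟨s, hs, rfl⟩
    exact ⟨s, hs, (mul_assoc a b s).symm⟩

theorem SCoprime.symm {u v : G} (h : SCoprime S u v) : SCoprime S v u :=
  fun c hc hcv hcu => h c hc hcu hcv

theorem SCoprime.of_sdvd_right {u v w : G} (h : SCoprime S u v) (hwv : SDvd S w v) :
    SCoprime S u w :=
  fun c hc hcu hcw => h c hc hcu (hcw.trans hwv)

theorem SIsLcm.symm {u v m : G} (h : SIsLcm S u v m) : SIsLcm S v u m :=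
  fun t => (h t).trans and_comm

theorem SIsLcm.sdvd_left {u v m : G} (h : SIsLcm S u v m) : SDvd S u m :=
  ((h m).mp (.refl m)).1

theorem SIsLcm.sdvd_right {u v m : G} (h : SIsLcm S u v m) : SDvd S v m :=
  ((h m).mp (.refl m)).2

theorem SIsLcm.of_mul_left {d u v m : G} (h : SIsLcm S (d * u) (d * v) (d * m)) :
    SIsLcm S u v m := fun t => by
  simpa only [mul_sdvd_mul_iff_left] using h (d * t)

theorem SIsLcm.of_sdvd_of_sdvd {u a b m : G} (h : SIsLcm S u a m) (hab : SDvd S a b)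
    (hbm : SDvd S b m) : SIsLcm S u b m := fun t => by
  rw [h t]
  exact ⟨fun ⟨hu, ha⟩ => ⟨hu, hbm.trans ((h t).mpr ⟨hu, ha⟩)⟩,
    fun ⟨hu, hb⟩ => ⟨hu, hab.trans hb⟩⟩

theorem SIsLcm.assoc_of_sdvd {u a b l m : G} (hl : SIsLcm S u a l) (hab : SDvd S a b)
    (hm : SIsLcm S u b m) : SIsLcm S l b m := fun t => by
  rw [hm t, hl t]
  exact ⟨fun ⟨hu, hb⟩ => ⟨⟨hu, hab.trans hb⟩, hb⟩, fun ⟨⟨hu, _⟩, hb⟩ => ⟨hu, hb⟩⟩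

theorem SIrreducible.sCoprime_of_ne {p q : G} (hp : SIrreducible S p) (hq : SIrreducible S q)
    (hpq : p ≠ q) : SCoprime S p q := fun c hc hcp hcq => by
  rcases hp.eq_one_or_eq c hc hcp with h | rfl
  · exact h
  · exact (hq.eq_one_or_eq c hc hcq).resolve_right hpq

namespace IntegralMonoid

theorem mul_eq_one_iff (hS : IntegralMonoid S) {a b : G} (ha : a ∈ S) (hb : b ∈ S) :
    a * b = 1 ↔ a = 1 ∧ b = 1 := by
  refine ⟨fun h => ?_, fun ⟨ha, hb⟩ => by rw [ha, hb, mul_one]⟩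
  have ha1 : a = 1 := hS.ax1 a ha (by rwa [inv_eq_of_mul_eq_one_right h])
  subst ha1
  exact ⟨rfl, by rwa [one_mul] at h⟩

theorem sdvd_antisymm (hS : IntegralMonoid S) {a b : G} (hab : SDvd S a b) (hba : SDvd S b a) :
    a = b := by
  obtain ⟨s, hs, rfl⟩ := hab
  obtain ⟨t, ht, h⟩ := hba
  have hst : s * t = 1 := left_eq_mul.mp (h.trans (mul_assoc a s t))
  rw [((hS.mul_eq_one_iff hs ht).mp hst).1, mul_one]

theorem eq_one_of_sdvd_one (hS : IntegralMonoid S) {c : G} (hc : c ∈ S) (h : SDvd S c 1) :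
    c = 1 :=
  hS.sdvd_antisymm h (one_sdvd hc)

theorem exists_sIsLcm (hS : IntegralMonoid S) (a b : G) : ∃ m, SIsLcm S a b m := by
  obtain ⟨x, hx, y, hy, hxy, hmin⟩ := hS.ax2 (a⁻¹ * b)
  have hbay : b * y = a * x := by
    rw [inv_mul_eq_iff_eq_mul] at hxy
    rw [hxy, mul_assoc, inv_mul_cancel_right]
  have hbm : SDvd S b (a * x) := ⟨y, hy, hbay.symm⟩
  refine ⟨a * x, fun t => ⟨fun hmt => ⟨(sdvd_mul_right a hx).trans hmt, hbm.trans hmt⟩, ?_⟩⟩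
  rintro ⟨⟨z, hz, rfl⟩, ⟨w, hw, hzw⟩⟩
  obtain ⟨c, hc, rfl, -⟩ := hmin z hz w hw (by rw [inv_mul_eq_iff_eq_mul, ← mul_assoc, hzw]; group)
  exact ⟨c, hc, (mul_assoc a x c).symm⟩

theorem tau_lt_tau_mul_left (hS : IntegralMonoid S) {a b : G} (ha : a ∈ S) (hb : b ∈ S)
    (ha1 : a ≠ 1) : tau S b < tau S (a * b) := by
  have hinj : Function.Injective fun p : G × G => (a * p.1, p.2) :=
    fun p q h => by
      simp only [Prod.mk.injEq, mul_right_inj] at h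
      exact Prod.ext h.1 h.2
  have hsub : (fun p : G × G => (a * p.1, p.2)) '' factorPairs S b ⊂ factorPairs S (a * b) := by
    refine (Set.ssubset_iff_of_subset ?_).mpr
      ⟨(1, a * b), ⟨S.one_mem, S.mul_mem ha hb, one_mul _⟩, ?_⟩
    · rintro _ ⟨⟨v, w⟩, ⟨hv, hw, rfl⟩, rfl⟩
      exact ⟨S.mul_mem ha hv, hw, mul_assoc a v w⟩
    · rintro ⟨⟨v, w⟩, ⟨hv, -, -⟩, h⟩
      exact ha1 ((hS.mul_eq_one_iff ha hv).mp (congrArg Prod.fst h)).1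
  calc tau S b = _ := (Set.ncard_image_of_injective _ hinj).symm
    _ < tau S (a * b) := Set.ncard_lt_ncard hsub (hS.ax3 _ (S.mul_mem ha hb))

theorem tau_lt_tau_mul_right (hS : IntegralMonoid S) {a b : G} (ha : a ∈ S) (hb : b ∈ S)
    (hb1 : b ≠ 1) : tau S a < tau S (a * b) := by
  have hinj : Function.Injective fun p : G × G => (p.1, p.2 * b) :=
    fun p q h => by
      simp only [Prod.mk.injEq, mul_left_inj] at h
      exact Prod.ext h.1 h.2
  have hsub : (fun p : G × G => (p.1, p.2 * b)) '' factorPairs S a ⊂ factorPairs S (a * b) := by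
    refine (Set.ssubset_iff_of_subset ?_).mpr
      ⟨(a * b, 1), ⟨S.mul_mem ha hb, S.one_mem, mul_one _⟩, ?_⟩
    · rintro _ ⟨⟨v, w⟩, ⟨hv, hw, rfl⟩, rfl⟩
      exact ⟨hv, S.mul_mem hw hb, (mul_assoc v w b).symm⟩
    · rintro ⟨⟨v, w⟩, ⟨-, hw, -⟩, h⟩
      exact hb1 ((hS.mul_eq_one_iff hw hb).mp (congrArg Prod.snd h)).2
  calc tau S a = _ := (Set.ncard_image_of_injective _ hinj).symm
    _ < tau S (a * b) := Set.ncard_lt_ncard hsub (hS.ax3 _ (S.mul_mem ha hb))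

theorem factorPairs_one (hS : IntegralMonoid S) : factorPairs S 1 = {(1, 1)} := by
  ext ⟨v, w⟩
  refine ⟨fun ⟨hv, hw, h⟩ => ?_, ?_⟩
  · obtain ⟨rfl, rfl⟩ := (hS.mul_eq_one_iff hv hw).mp h
    rfl
  · rintro ⟨⟩
    exact ⟨S.one_mem, S.one_mem, mul_one 1⟩

theorem sIrreducible_of_tau_eq_two (hS : IntegralMonoid S) {x : G} (hx : x ∈ S)
    (h : tau S x = 2) : SIrreducible S x := by
  have hx1 : x ≠ 1 := by
    rintro rfl
    rw [tau, ← factorPairs, hS.factorPairs_one, Set.ncard_singleton] at h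
    exact absurd h (by decide)
  have hpairs : ({(1, x), (x, 1)} : Set (G × G)) = factorPairs S x := by
    refine Set.eq_of_subset_of_ncard_le ?_ ?_ (hS.ax3 x hx)
    · rintro _ (rfl | rfl)
      exacts [⟨S.one_mem, hx, one_mul x⟩, ⟨hx, S.one_mem, mul_one x⟩]
    · rw [Set.ncard_pair fun h => hx1 (congrArg Prod.fst h).symm]
      exact h.le
  refine ⟨hx, hx1, fun a ha ⟨s, hs, hxas⟩ => ?_⟩
  have : (a, s) ∈ factorPairs S x := ⟨ha, hs, hxas.symm⟩
  rw [← hpairs] at this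
  rcases this with h | h
  exacts [.inl (congrArg Prod.fst h), .inr (congrArg Prod.fst h)]

theorem exists_factorization (hS : IntegralMonoid S) {x : G} (hx : x ∈ S) :
    ∃ l : List G, (∀ p ∈ l, SIrreducible S p) ∧ l.prod = x := by
  induction hn : tau S x using Nat.strong_induction_on generalizing x with
  | _ n ih =>
  by_cases hx1 : x = 1
  · exact ⟨[], by simp, hx1.symm⟩
  by_cases hirr : ∀ a ∈ S, SDvd S a x → a = 1 ∨ a = x
  · exact ⟨[x], by simpa using SIrreducible.mk hx hx1 hirr, List.prod_singleton⟩
  push Not at hirr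
  obtain ⟨a, ha, ⟨b, hb, rfl⟩, ha1, hab⟩ := hirr
  have hb1 : b ≠ 1 := by rintro rfl; exact hab (mul_one a).symm
  obtain ⟨la, hla, rfl⟩ := ih _ (hn ▸ hS.tau_lt_tau_mul_right ha hb hb1) ha rfl
  obtain ⟨lb, hlb, rfl⟩ := ih _ (hn ▸ hS.tau_lt_tau_mul_left ha hb ha1) hb rfl
  exact ⟨la ++ lb, List.forall_mem_append.mpr ⟨hla, hlb⟩, List.prod_append⟩

theorem list_prod_eq_one_iff (hS : IntegralMonoid S) {l : List G}
    (hl : ∀ p ∈ l, SIrreducible S p) : l.prod = 1 ↔ l = [] := by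
  refine ⟨fun h => ?_, fun h => by rw [h, List.prod_nil]⟩
  rcases l with _ | ⟨p, t⟩
  · rfl
  rw [List.forall_mem_cons] at hl
  rw [List.prod_cons] at h
  exact absurd ((hS.mul_eq_one_iff hl.1.mem (list_prod_mem fun q hq => (hl.2 q hq).mem)).mp h).1
    hl.1.ne_one

end IntegralMonoid

namespace Homogeneous

theorem eq_of_sIsLcm (hhom : Homogeneous S) {w u v m : G} (hw : w ∈ S) (hu : u ∈ S) (hv : v ∈ S)
    (hwu : SCoprime S w u) (hwv : SCoprime S w v) (hu' : SIsLcm S w u m)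
    (hv' : SIsLcm S w v m) : u = v :=
  hhom w u v hw hu hv hwu hwv (Set.ext fun t => (hu' t).symm.trans (hv' t))

theorem eq_one_of_mul_sdvd_lcm (hhom : Homogeneous S) {w q z m : G} (hw : w ∈ S) (hq : q ∈ S)
    (hz : z ∈ S) (hwq : SCoprime S w q) (hwqz : SCoprime S w (q * z)) (hm : SIsLcm S w q m)
    (hqz : SDvd S (q * z) m) : z = 1 :=
  left_eq_mul.mp <| hhom.eq_of_sIsLcm hw hq (S.mul_mem hq hz) hwq hwqz hm
    (hm.of_sdvd_of_sdvd (sdvd_mul_right q hz) hqz)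

theorem sIrreducible_of_sIsLcm (hhom : Homogeneous S) (hS : IntegralMonoid S) {u q a : G}
    (hu : u ∈ S) (hq : SIrreducible S q) (hcop : SCoprime S u q) (ha : a ∈ S)
    (hm : SIsLcm S u q (u * a)) : SIrreducible S a := by
  refine ⟨ha, ?_, fun t ht hta => ?_⟩
  · rintro rfl
    rw [mul_one] at hm
    exact hq.ne_one (hcop q hq.mem hm.sdvd_right (.refl q))
  by_cases hta' : t = a
  · exact .inr hta'
  refine .inl (hhom.eq_one_of_mul_sdvd_lcm hq.mem hu ht hcop.symm ?_ hm.symm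
    (mul_sdvd_mul_iff_left.mpr hta))
  intro c hc hcq hcut
  rcases hq.eq_one_or_eq c hc hcq with h | rfl
  · exact h
  · have hat : SDvd S a t :=
      mul_sdvd_mul_iff_left.mp ((hm (u * t)).mpr ⟨sdvd_mul_right u ht, hcut⟩)
    exact absurd (hS.sdvd_antisymm hta hat) hta'

theorem exists_sIrreducible_mul_eq (hhom : Homogeneous S) (hS : IntegralMonoid S) {p q x : G}
    (hp : SIrreducible S p) (hq : SIrreducible S q) (hpq : p ≠ q) (hpx : SDvd S p x)
    (hqx : SDvd S q x) : ∃ a b r, SIrreducible S a ∧ SIrreducible S b ∧ r ∈ S ∧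
      x = p * (b * r) ∧ x = q * (a * r) := by
  have hcop := hp.sCoprime_of_ne hq hpq
  obtain ⟨m, hm⟩ := hS.exists_sIsLcm p q
  obtain ⟨b, hb, rfl⟩ := hm.sdvd_left
  obtain ⟨a, ha, hba⟩ := hm.sdvd_right
  obtain ⟨r, hr, rfl⟩ := (hm x).mpr ⟨hpx, hqx⟩
  refine ⟨a, b, r, hhom.sIrreducible_of_sIsLcm hS hq.mem hp hcop.symm ha (hba ▸ hm.symm),
    hhom.sIrreducible_of_sIsLcm hS hp.mem hq hcop hb hm, hr, mul_assoc p b r, ?_⟩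
  rw [hba, mul_assoc]

theorem length_eq_of_prod_eq (hhom : Homogeneous S) (hS : IntegralMonoid S) {l₁ l₂ : List G}
    (h₁ : ∀ p ∈ l₁, SIrreducible S p) (h₂ : ∀ p ∈ l₂, SIrreducible S p)
    (h : l₁.prod = l₂.prod) : l₁.length = l₂.length := by
  induction hn : tau S l₁.prod using Nat.strong_induction_on generalizing l₁ l₂ with
  | _ n ih =>
  rcases l₁ with _ | ⟨p, t₁⟩ <;> rcases l₂ with _ | ⟨q, t₂⟩
  · rfl
  · simpa using (hS.list_prod_eq_one_iff h₂).mp h.symm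
  · simpa using (hS.list_prod_eq_one_iff h₁).mp h
  rw [List.forall_mem_cons] at h₁ h₂
  obtain ⟨hp, ht₁⟩ := h₁
  obtain ⟨hq, ht₂⟩ := h₂
  have hmem₁ : t₁.prod ∈ S := list_prod_mem fun r hr => (ht₁ r hr).mem
  have hmem₂ : t₂.prod ∈ S := list_prod_mem fun r hr => (ht₂ r hr).mem
  rw [List.prod_cons, List.prod_cons] at h
  rw [List.prod_cons] at hn
  have hlt₁ : tau S t₁.prod < n := hn ▸ hS.tau_lt_tau_mul_left hp.mem hmem₁ hp.ne_one
  have hlt₂ : tau S t₂.prod < n := hn ▸ h ▸ hS.tau_lt_tau_mul_left hq.mem hmem₂ hq.ne_one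
  by_cases hpq : p = q
  · subst hpq
    simpa using ih _ hlt₁ ht₁ ht₂ (mul_left_cancel h) rfl
  obtain ⟨a, b, r, ha, hb, hr, hx₁, hx₂⟩ := hhom.exists_sIrreducible_mul_eq hS hp hq hpq
    (sdvd_mul_right p hmem₁) ⟨t₂.prod, hmem₂, h⟩
  obtain ⟨lr, hlr, rfl⟩ := hS.exists_factorization hr
  have e₁ : t₁.length = (b :: lr).length :=
    ih _ hlt₁ ht₁ (List.forall_mem_cons.mpr ⟨hb, hlr⟩) (mul_left_cancel hx₁) rfl
  have e₂ : t₂.length = (a :: lr).length :=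
    ih _ hlt₂ ht₂ (List.forall_mem_cons.mpr ⟨ha, hlr⟩) (mul_left_cancel (h.symm.trans hx₂)) rfl
  simp only [List.length_cons] at e₁ e₂ ⊢
  omega

end Homogeneous

theorem ind_list_prod (hhom : Homogeneous S) (hS : IntegralMonoid S) {l : List G}
    (hl : ∀ p ∈ l, SIrreducible S p) : ind S l.prod = l.length := by
  have : {n | ∃ l' : List G, (∀ p ∈ l', SIrreducible S p) ∧ l'.prod = l.prod ∧ l'.length = n} =
      {l.length} := by
    ext n
    refine ⟨?_, fun hn => ⟨l, hl, rfl, hn.symm⟩⟩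
    rintro ⟨l', hl', hprod, rfl⟩
    exact hhom.length_eq_of_prod_eq hS hl' hl hprod
  rw [ind, this, csInf_singleton]

theorem ind_list_prod_of_tau_eq_two (hhom : Homogeneous S) (hS : IntegralMonoid S) {l : List G}
    (hl : ∀ x ∈ l, x ∈ S ∧ tau S x = 2) : ind S l.prod = l.length :=
  ind_list_prod hhom hS fun x hx => hS.sIrreducible_of_tau_eq_two (hl x hx).1 (hl x hx).2

theorem ind_one (hhom : Homogeneous S) (hS : IntegralMonoid S) : ind S 1 = 0 :=
  ind_list_prod (l := []) hhom hS (by simp)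

theorem SIrreducible.ind_eq_one (hhom : Homogeneous S) (hS : IntegralMonoid S) {p : G}
    (hp : SIrreducible S p) : ind S p = 1 := by
  simpa using ind_list_prod (l := [p]) hhom hS (by simpa using hp)

theorem ind_mul (hhom : Homogeneous S) (hS : IntegralMonoid S) {x y : G} (hx : x ∈ S)
    (hy : y ∈ S) : ind S (x * y) = ind S x + ind S y := by
  obtain ⟨lx, hlx, rfl⟩ := hS.exists_factorization hx
  obtain ⟨ly, hly, rfl⟩ := hS.exists_factorization hy
  rw [← List.prod_append, ind_list_prod hhom hS (List.forall_mem_append.mpr ⟨hlx, hly⟩),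
    ind_list_prod hhom hS hlx, ind_list_prod hhom hS hly, List.length_append]

theorem Homogeneous.sCoprime_of_sIsLcm (hhom : Homogeneous S) {u q v u₁ : G} (hu : u ∈ S)
    (hq : q ∈ S) (hv : v ∈ S) (hcop : SCoprime S u (q * v)) (hl : SIsLcm S u q (q * u₁)) :
    SCoprime S u₁ v := fun _ hc hcu₁ hcv =>
  hhom.eq_one_of_mul_sdvd_lcm hu hq hc (hcop.of_sdvd_right (sdvd_mul_right q hv))
    (fun c' hc' hc'u hc'qc => hcop c' hc' hc'u (hc'qc.trans (mul_sdvd_mul_iff_left.mpr hcv))) hl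
    (mul_sdvd_mul_iff_left.mpr hcu₁)

theorem Homogeneous.ind_lcm_of_sCoprime (hhom : Homogeneous S) (hS : IntegralMonoid S)
    {u v m : G} (hu : u ∈ S) (hv : v ∈ S) (hcop : SCoprime S u v) (hm : SIsLcm S u v m) :
    ind S m = ind S u + ind S v := by
  obtain ⟨l, hl, rfl⟩ := hS.exists_factorization hv
  induction l generalizing u m with
  | nil =>
    have hmu : m = u := hS.sdvd_antisymm ((hm u).mpr ⟨.refl u, one_sdvd hu⟩) hm.sdvd_left
    rw [hmu, List.prod_nil, ind_one hhom hS, add_zero]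
  | cons q l ih =>
    rw [List.forall_mem_cons] at hl
    obtain ⟨hq, hl⟩ := hl
    have hv : l.prod ∈ S := list_prod_mem fun p hp => (hl p hp).mem
    rw [List.prod_cons] at hcop hm ⊢
    -- `lcm(u, q) = u * q' = q * u₁` with `q'` irreducible, and `lcm(u, q * v') = q * lcm(u₁, v')`
    obtain ⟨m₁, hm₁⟩ := hS.exists_sIsLcm u q
    obtain ⟨q', hq', rfl⟩ := hm₁.sdvd_left
    obtain ⟨u₁, hu₁, hqu₁⟩ := hm₁.sdvd_right
    obtain ⟨m₂, hm₂, rfl⟩ := (sdvd_mul_right q hv).trans hm.sdvd_right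
    have hq'irr := hhom.sIrreducible_of_sIsLcm hS hu hq (hcop.of_sdvd_right
      (sdvd_mul_right q hv)) hq' hm₁
    rw [hqu₁] at hm₁
    have hind := ih hu₁ hl hv (hhom.sCoprime_of_sIsLcm hu hq.mem hv hcop hm₁)
      (hm₁.assoc_of_sdvd (sdvd_mul_right q hv) hm).of_mul_left
    have hind₁ := congrArg (ind S) hqu₁
    rw [ind_mul hhom hS hu hq', ind_mul hhom hS hq.mem hu₁, hq'irr.ind_eq_one hhom hS,
      hq.ind_eq_one hhom hS] at hind₁
    rw [ind_mul hhom hS hq.mem hm₂, ind_mul hhom hS hq.mem hv, hind, hq.ind_eq_one hhom hS]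
    omega

theorem IntegralMonoid.sCoprime_of_forall_sdvd (hS : IntegralMonoid S) {d u v : G} (hd : d ∈ S)
    (h : ∀ e ∈ S, SDvd S e (d * u) → SDvd S e (d * v) → SDvd S e d) : SCoprime S u v :=
  fun c hc hcu hcv => by
  have hdc : SDvd S (d * c) (d * 1) := by
    rw [mul_one]
    exact h (d * c) (S.mul_mem hd hc) (mul_sdvd_mul_iff_left.mpr hcu)
      (mul_sdvd_mul_iff_left.mpr hcv)
  exact hS.eq_one_of_sdvd_one hc (mul_sdvd_mul_iff_left.mp hdc)

end

theorem ind_gcd_add_ind_lcm_general {G : Type*} [Group G] (S : Submonoid G)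
    (hS : IntegralMonoid S) (hhom : Homogeneous S)
    (u v d m : G) (hd : d ∈ S)
    (hd1 : SDvd S d u) (hd2 : SDvd S d v)
    (hd3 : ∀ e ∈ S, SDvd S e u → SDvd S e v → SDvd S e d)
    (hlcm : leftSet S u ∩ leftSet S v = leftSet S m)
    (ld lm lu lv : List G)
    (hld : ∀ x ∈ ld, x ∈ S ∧ tau S x = 2) (hlm : ∀ x ∈ lm, x ∈ S ∧ tau S x = 2)
    (hlu : ∀ x ∈ lu, x ∈ S ∧ tau S x = 2) (hlv : ∀ x ∈ lv, x ∈ S ∧ tau S x = 2)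
    (hpd : ld.prod = d) (hpm : lm.prod = m) (hpu : lu.prod = u) (hpv : lv.prod = v) :
    ld.length + lm.length = lu.length + lv.length := by
  have hlcm' : SIsLcm S u v m := fun t => (Set.ext_iff.mp hlcm t).symm
  obtain ⟨u₁, hu₁, rfl⟩ := hd1
  obtain ⟨v₁, hv₁, rfl⟩ := hd2
  obtain ⟨m₁, hm₁, rfl⟩ := (sdvd_mul_right d hu₁).trans hlcm'.sdvd_left
  have hind := hhom.ind_lcm_of_sCoprime hS hu₁ hv₁ (hS.sCoprime_of_forall_sdvd hd hd3)
    hlcm'.of_mul_left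
  have hd' := ind_list_prod_of_tau_eq_two hhom hS hld
  have hm' := ind_list_prod_of_tau_eq_two hhom hS hlm
  have hu' := ind_list_prod_of_tau_eq_two hhom hS hlu
  have hv' := ind_list_prod_of_tau_eq_two hhom hS hlv
  rw [hpd] at hd'
  rw [hpm, ind_mul hhom hS hd hm₁] at hm'
  rw [hpu, ind_mul hhom hS hd hu₁] at hu'
  rw [hpv, ind_mul hhom hS hd hv₁] at hv'
  omega

theorem ind_gcd_add_ind_lcm {G : Type*} [Group G] (S : Submonoid G)
    (hS : IntegralMonoid S) (hhom : Homogeneous S)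
    (u v d m : G) (hu : u ∈ S) (hv : v ∈ S) (hd : d ∈ S) (hm : m ∈ S)
    (hd1 : SDvd S d u) (hd2 : SDvd S d v)
    (hd3 : ∀ e ∈ S, SDvd S e u → SDvd S e v → SDvd S e d)
    (hlcm : leftSet S u ∩ leftSet S v = leftSet S m)
    (ld lm lu lv : List G)
    (hld : ∀ x ∈ ld, x ∈ S ∧ tau S x = 2) (hlm : ∀ x ∈ lm, x ∈ S ∧ tau S x = 2)
    (hlu : ∀ x ∈ lu, x ∈ S ∧ tau S x = 2) (hlv : ∀ x ∈ lv, x ∈ S ∧ tau S x = 2)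
    (hpd : ld.prod = d) (hpm : lm.prod = m) (hpu : lu.prod = u) (hpv : lv.prod = v) :
    ld.length + lm.length = lu.length + lv.length :=
  ind_gcd_add_ind_lcm_general S hS hhom u v d m hd hd1 hd2 hd3 hlcm ld lm lu lv hld hlm hlu hlv hpd
    hpm hpu hpv
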